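/- arXiv:2205.01708 — 7 statements merged into one kernel-verified Lean document; each statement's English description precedes it below -/
import Mathlib

section
/- Let a₁, b₁, c₁, a₂, b₂, c₂, s be complex numbers with a₁, a₂, c₁, c₂ all nonzero. Let r₊ be a nonzero root of c₁ r² + (b₁ - s) r + a₁ = 0 and r₋ a nonzero root of c₂ r² + (b₂ - s) r + a₂ = 0, and assume a₂ ≠ c₂ r₋ and c₁ ≠ a₁ r₊⁻¹. Then the contraction factor for the Robin transmission condition with two overlapping nodes, ρ = [(a₂ - c₂ r₋)/(a₁ r₊⁻² + (b₁-s) r₊⁻¹ + a₁ r₊⁻¹)] · [(c₁ - a₁ r₊⁻¹)/(c₂ r₋ + (b₂-s) r₋ + c₂ r₋²)], equals 1. -/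
/-! Both denominators are, up to sign, the numerator of the other factor: dividing the
characteristic equation of `rp` by `rp ^ 2` gives `a₁ rp⁻² + (b₁ - s) rp⁻¹ = -c₁`, and that of
`rm` gives `c₂ rm² + (b₂ - s) rm = -a₂`. Hence `ρ = x / (-y) * (y / (-x)) = 1`. -/

theorem reversed_quadratic_eq_zero {K : Type*} [Field K] {a b c r : K}
    (h : c * r ^ 2 + b * r + a = 0) (hr : r ≠ 0) : a * r⁻¹ ^ 2 + b * r⁻¹ + c = 0 := by
  field_simp
  linear_combination h

theorem div_neg_mul_div_neg_self {K : Type*} [Field K] {x y : K} (hx : x ≠ 0) (hy : y ≠ 0) :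
    x / -y * (y / -x) = 1 := by
  rw [div_neg, div_neg, neg_mul_neg, div_mul_div_cancel₀ hy, div_self hx]

theorem stmt_4_general (a₁ b₁ c₁ a₂ b₂ c₂ s rp rm : ℂ)
    (hrp : c₁ * rp ^ 2 + (b₁ - s) * rp + a₁ = 0) (hrp0 : rp ≠ 0)
    (hrm : c₂ * rm ^ 2 + (b₂ - s) * rm + a₂ = 0)
    (h1 : a₂ ≠ c₂ * rm) (h2 : c₁ ≠ a₁ * rp⁻¹) :
    ((a₂ - c₂ * rm) / (a₁ * rp⁻¹ ^ 2 + (b₁ - s) * rp⁻¹ + a₁ * rp⁻¹)) *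
      ((c₁ - a₁ * rp⁻¹) / (c₂ * rm + (b₂ - s) * rm + c₂ * rm ^ 2)) = 1 := by
  have hden₁ : a₁ * rp⁻¹ ^ 2 + (b₁ - s) * rp⁻¹ + a₁ * rp⁻¹ = -(c₁ - a₁ * rp⁻¹) := by
    linear_combination reversed_quadratic_eq_zero hrp hrp0
  have hden₂ : c₂ * rm + (b₂ - s) * rm + c₂ * rm ^ 2 = -(a₂ - c₂ * rm) := by
    linear_combination hrm
  rw [hden₁, hden₂]
  exact div_neg_mul_div_neg_self (sub_ne_zero.mpr h1) (sub_ne_zero.mpr h2)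

/-- The contraction factor for the Robin transmission condition with two
overlapping nodes equals `1` (no convergence). -/
theorem stmt_4 (a₁ b₁ c₁ a₂ b₂ c₂ s rp rm : ℂ)
    (ha₁ : a₁ ≠ 0) (ha₂ : a₂ ≠ 0) (hc₁ : c₁ ≠ 0) (hc₂ : c₂ ≠ 0)
    (hrp : c₁ * rp ^ 2 + (b₁ - s) * rp + a₁ = 0) (hrp0 : rp ≠ 0)
    (hrm : c₂ * rm ^ 2 + (b₂ - s) * rm + a₂ = 0) (hrm0 : rm ≠ 0)
    (h1 : a₂ ≠ c₂ * rm) (h2 : c₁ ≠ a₁ * rp⁻¹) :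
    ((a₂ - c₂ * rm) / (a₁ * rp⁻¹ ^ 2 + (b₁ - s) * rp⁻¹ + a₁ * rp⁻¹)) *
      ((c₁ - a₁ * rp⁻¹) / (c₂ * rm + (b₂ - s) * rm + c₂ * rm ^ 2)) = 1 :=
  stmt_4_general a₁ b₁ c₁ a₂ b₂ c₂ s rp rm hrp hrp0 hrm h1 h2
end

section
/- Under the same hypotheses as the two-node Robin case, with the grids overlapping at three nodes instead, the contraction factor acquires an extra multiplicative factor r₋/r₊, i.e. ρ = [(a₂ - c₂ r₋)(c₁ - a₁ r₊⁻¹)] / [(a₁ r₊⁻² + (b₁-s) r₊⁻¹ + a₁ r₊⁻¹)(c₂ r₋ + (b₂-s) r₋ + c₂ r₋²)] · (r₋/r₊) = r₋/r₊. Consequently, if |r₋| < 1 < |r₊| then |ρ| < 1. -/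
/-! At a root `r₊` of the first characteristic polynomial, the first factor of the denominator
is `-(c₁ - a₁ r₊⁻¹)`, and at a root `r₋` of the second it is `-(a₂ - c₂ r₋)`. The Robin factor
therefore cancels to `1`, the contraction factor is `r₋ / r₊`, and `|r₋| < 1 < |r₊|` bounds it. -/

section CharacteristicRoot

variable {K : Type*} [Field K] {a b c r : K}

theorem add_inv_sq_eq_neg_of_quadratic_eq_zero (hr : c * r ^ 2 + b * r + a = 0) (hr0 : r ≠ 0) :
    a * r⁻¹ ^ 2 + b * r⁻¹ + a * r⁻¹ = -(c - a * r⁻¹) := by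
  field_simp
  linear_combination hr

theorem add_sq_eq_neg_of_quadratic_eq_zero (hr : c * r ^ 2 + b * r + a = 0) :
    c * r + b * r + c * r ^ 2 = -(a - c * r) := by
  linear_combination hr

end CharacteristicRoot

theorem robin_factor_eq_one {K : Type*} [Field K] {a₁ b₁ c₁ a₂ b₂ c₂ rp rm : K}
    (hrp : c₁ * rp ^ 2 + b₁ * rp + a₁ = 0) (hrp0 : rp ≠ 0)
    (hrm : c₂ * rm ^ 2 + b₂ * rm + a₂ = 0)
    (h1 : a₂ ≠ c₂ * rm) (h2 : c₁ ≠ a₁ * rp⁻¹) :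
    ((a₂ - c₂ * rm) * (c₁ - a₁ * rp⁻¹)) /
        ((a₁ * rp⁻¹ ^ 2 + b₁ * rp⁻¹ + a₁ * rp⁻¹) * (c₂ * rm + b₂ * rm + c₂ * rm ^ 2)) = 1 := by
  rw [add_inv_sq_eq_neg_of_quadratic_eq_zero hrp hrp0, add_sq_eq_neg_of_quadratic_eq_zero hrm,
    neg_mul_neg, mul_comm (c₁ - _)]
  exact div_self (mul_ne_zero (sub_ne_zero.mpr h1) (sub_ne_zero.mpr h2))

theorem norm_div_lt_one_of_norm_lt_one_lt_norm {K : Type*} [NormedDivisionRing K] {x y : K}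
    (hx : ‖x‖ < 1) (hy : 1 < ‖y‖) : ‖x / y‖ < 1 := by
  rw [norm_div, div_lt_one (by linarith)]
  linarith

theorem stmt_5_general (a₁ b₁ c₁ a₂ b₂ c₂ s rp rm : ℂ)
    (hrp : c₁ * rp ^ 2 + (b₁ - s) * rp + a₁ = 0) (hrp1 : 1 < ‖rp‖)
    (hrm : c₂ * rm ^ 2 + (b₂ - s) * rm + a₂ = 0) (hrm1 : ‖rm‖ < 1)
    (h1 : a₂ ≠ c₂ * rm) (h2 : c₁ ≠ a₁ * rp⁻¹) :
    ((a₂ - c₂ * rm) * (c₁ - a₁ * rp⁻¹)) /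
        ((a₁ * rp⁻¹ ^ 2 + (b₁ - s) * rp⁻¹ + a₁ * rp⁻¹) *
          (c₂ * rm + (b₂ - s) * rm + c₂ * rm ^ 2)) * (rm / rp) = rm / rp ∧
    ‖(((a₂ - c₂ * rm) * (c₁ - a₁ * rp⁻¹)) /
        ((a₁ * rp⁻¹ ^ 2 + (b₁ - s) * rp⁻¹ + a₁ * rp⁻¹) *
          (c₂ * rm + (b₂ - s) * rm + c₂ * rm ^ 2)) * (rm / rp))‖ < 1 := by
  have hrp0 : rp ≠ 0 := norm_pos_iff.mp (one_pos.trans hrp1)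
  rw [robin_factor_eq_one hrp hrp0 hrm h1 h2, one_mul]
  exact ⟨rfl, norm_div_lt_one_of_norm_lt_one_lt_norm hrm1 hrp1⟩

/-- Robin transmission condition with three overlapping nodes: the contraction
factor equals `r₋ / r₊`, hence has modulus `< 1`. -/
theorem stmt_5 (a₁ b₁ c₁ a₂ b₂ c₂ s rp rm : ℂ)
    (ha₁ : a₁ ≠ 0) (ha₂ : a₂ ≠ 0) (hc₁ : c₁ ≠ 0) (hc₂ : c₂ ≠ 0)
    (hrp : c₁ * rp ^ 2 + (b₁ - s) * rp + a₁ = 0) (hrp1 : 1 < ‖rp‖)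
    (hrm : c₂ * rm ^ 2 + (b₂ - s) * rm + a₂ = 0) (hrm1 : ‖rm‖ < 1)
    (hrm0 : rm ≠ 0)
    (h1 : a₂ ≠ c₂ * rm) (h2 : c₁ ≠ a₁ * rp⁻¹) :
    ((a₂ - c₂ * rm) * (c₁ - a₁ * rp⁻¹)) /
        ((a₁ * rp⁻¹ ^ 2 + (b₁ - s) * rp⁻¹ + a₁ * rp⁻¹) *
          (c₂ * rm + (b₂ - s) * rm + c₂ * rm ^ 2)) * (rm / rp) = rm / rp ∧
    ‖(((a₂ - c₂ * rm) * (c₁ - a₁ * rp⁻¹)) /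
        ((a₁ * rp⁻¹ ^ 2 + (b₁ - s) * rp⁻¹ + a₁ * rp⁻¹) *
          (c₂ * rm + (b₂ - s) * rm + c₂ * rm ^ 2)) * (rm / rp))‖ < 1 :=
  stmt_5_general a₁ b₁ c₁ a₂ b₂ c₂ s rp rm hrp hrp1 hrm hrm1 h1 h2
end

section
/- Let a₁, b₁, c₁, a₂, b₂, c₂, s, α, β be complex numbers with all of a₁, c₁, a₂, c₂ nonzero; let r₊ be a nonzero root of c₁r² + (b₁-s)r + a₁ = 0 and r₋ a nonzero root of c₂r² + (b₂-s)r + a₂ = 0, with a₁ ≠ c₁ r₊ and a₂ ≠ c₂ r₋. Then the optimized-Robin contraction factor ρ = [(c₂ - a₂r₋⁻¹ + (1+α)(a₂ - c₂r₋))/(c₁ - a₁r₊⁻¹ + (1+α)(a₁ - c₁r₊))] · [(a₁r₊ - c₁r₊² + (1-β)(c₁r₊ - a₁))/(a₂r₋ - c₂r₋² + (1-β)(c₂r₋ - a₂))] · (r₋/r₊) equals [(1+α - r₋⁻¹)/(1+α - r₊⁻¹)] · [(1-β - r₊)/(1-β - r₋)] · (r₋/r₊), i.e. the same contraction factor as for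 the optimized Dirichlet algorithm, provided all denominators are nonzero. -/
lemma aux_cancel (x y p q P Q : ℂ) (hx : x ≠ 0) (hy : y ≠ 0) :
    y * p / (x * q) * (x * P / (y * Q)) = p / q * (P / Q) := by
  rw [div_mul_div_comm, div_mul_div_comm,
    show y * p * (x * P) = x * y * (p * P) from by ring,
    show x * q * (y * Q) = x * y * (q * Q) from by ring,
    mul_div_mul_left _ _ (mul_ne_zero hx hy)]

/-- The optimized Robin contraction factor equals the optimized Dirichlet
contraction factor. -/
theorem stmt_12 (a₁ b₁ c₁ a₂ b₂ c₂ s α β rp rm : ℂ)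
    (ha₁ : a₁ ≠ 0) (hc₁ : c₁ ≠ 0) (ha₂ : a₂ ≠ 0) (hc₂ : c₂ ≠ 0)
    (hrp : c₁ * rp ^ 2 + (b₁ - s) * rp + a₁ = 0) (hrp0 : rp ≠ 0)
    (hrm : c₂ * rm ^ 2 + (b₂ - s) * rm + a₂ = 0) (hrm0 : rm ≠ 0)
    (h1 : a₁ ≠ c₁ * rp) (h2 : a₂ ≠ c₂ * rm)
    (hd1 : c₁ - a₁ * rp⁻¹ + (1 + α) * (a₁ - c₁ * rp) ≠ 0)
    (hd2 : a₂ * rm - c₂ * rm ^ 2 + (1 - β) * (c₂ * rm - a₂) ≠ 0)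
    (hd3 : 1 + α - rp⁻¹ ≠ 0) (hd4 : 1 - β - rm ≠ 0) :
    ((c₂ - a₂ * rm⁻¹ + (1 + α) * (a₂ - c₂ * rm)) /
        (c₁ - a₁ * rp⁻¹ + (1 + α) * (a₁ - c₁ * rp))) *
      ((a₁ * rp - c₁ * rp ^ 2 + (1 - β) * (c₁ * rp - a₁)) /
        (a₂ * rm - c₂ * rm ^ 2 + (1 - β) * (c₂ * rm - a₂))) * (rm / rp) =
    ((1 + α - rm⁻¹) / (1 + α - rp⁻¹)) * ((1 - β - rp) / (1 - β - rm)) *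
      (rm / rp) := by
  have h1' : a₁ - c₁ * rp ≠ 0 := sub_ne_zero.mpr h1
  have h2' : a₂ - c₂ * rm ≠ 0 := sub_ne_zero.mpr h2
  have e1 : c₁ - a₁ * rp⁻¹ + (1 + α) * (a₁ - c₁ * rp)
      = (a₁ - c₁ * rp) * (1 + α - rp⁻¹) := by
    field_simp; ring
  have e2 : c₂ - a₂ * rm⁻¹ + (1 + α) * (a₂ - c₂ * rm)
      = (a₂ - c₂ * rm) * (1 + α - rm⁻¹) := by
    field_simp; ring
  have e3 : a₁ * rp - c₁ * rp ^ 2 + (1 - β) * (c₁ * rp - a₁)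
      = -((a₁ - c₁ * rp) * (1 - β - rp)) := by ring
  have e4 : a₂ * rm - c₂ * rm ^ 2 + (1 - β) * (c₂ * rm - a₂)
      = -((a₂ - c₂ * rm) * (1 - β - rm)) := by ring
  rw [e1, e2, e3, e4, neg_div_neg_eq,
    aux_cancel _ _ _ _ _ _ h1' h2']
end

section
/- Let μ, θ, γ, Δx, ω be real with θ > 0, γ > 0, Δx > 0, and set a = μ/(2Δx) + θ/Δx², b = -2θ/Δx² - γ, c = -μ/(2Δx) + θ/Δx². For s = σ + iω with σ ≥ 0, the complex number (s - b)² - 4ac is never zero; in particular the principal square root √((s-b)² - 4ac) has positive real part. Consequently, the functions r±(s) = (s - b ± √((s-b)² - 4ac))/(2c) (for c ≠ 0) are holomorphic on the closed right half-plane Re(s) ≥ 0. -/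
/-!
With `t = θ/Δx²` and `m = μ/(2Δx)` one has `4ac = 4t² - 4m² ≤ (2t)² < (2t + γ)² = b²`, and
`Re(s - b) ≥ -b > 0`. Hence `w = s - b` satisfies `(Re w)² > 4ac`, so `w² - 4ac` has either
nonzero imaginary part `2 Re w Im w` or, when `Im w = 0`, positive real part: it lies in the slit
plane. There the principal square root has positive real part and `z ↦ z ^ (1/2)` is holomorphic.
-/

namespace Complex

theorem sq_sub_ofReal_mem_slitPlane {w : ℂ} {q : ℝ} (hw : 0 < w.re) (hq : q < w.re ^ 2) :
    w ^ 2 - q ∈ slitPlane := by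
  rw [mem_slitPlane_iff]
  by_cases him : w.im = 0
  · left
    simp only [sq, sub_re, mul_re, him, mul_zero, sub_zero, ofReal_re, sub_pos]
    nlinarith
  · right
    simp [sq, mul_comm w.im, hw.ne', him]

theorem norm_add_re_pos_of_mem_slitPlane {z : ℂ} (hz : z ∈ slitPlane) : 0 < ‖z‖ + z.re := by
  rcases mem_slitPlane_iff.1 hz with hre | him
  · linarith [norm_nonneg z]
  · linarith [neg_abs_le z.re, abs_re_lt_norm.2 him]

theorem cpow_one_half_re_pos_of_mem_slitPlane {z : ℂ} (hz : z ∈ slitPlane) :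
    0 < (z ^ (1 / 2 : ℂ)).re := by
  rw [one_div, cpow_inv_two_re]
  exact Real.sqrt_pos.2 (half_pos (norm_add_re_pos_of_mem_slitPlane hz))

end Complex

open Complex

theorem four_mul_add_mul_neg_add_lt_sq {t γ : ℝ} (m : ℝ) (ht : 0 ≤ t) (hγ : 0 < γ) :
    4 * (m + t) * (-m + t) < (-(2 * t) - γ) ^ 2 := by
  nlinarith [sq_nonneg m]

theorem sub_sq_sub_mem_slitPlane {s : ℂ} {b q : ℝ} (hs : 0 ≤ s.re) (hb : b < 0) (hq : q < b ^ 2) :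
    (s - b) ^ 2 - q ∈ slitPlane := by
  have hw : -b ≤ (s - b).re := by simp [hs]
  exact sq_sub_ofReal_mem_slitPlane (by linarith) (by nlinarith)

theorem stmt_13_general (μ θ γ Δx : ℝ) (hθ : 0 < θ) (hγ : 0 < γ)
    (a b c : ℝ)
    (ha : a = μ / (2 * Δx) + θ / Δx ^ 2)
    (hb : b = -(2 * θ) / Δx ^ 2 - γ)
    (hc : c = -(μ / (2 * Δx)) + θ / Δx ^ 2)
    (s : ℂ) (hs : 0 ≤ s.re) :
    ((s - (b : ℂ)) ^ 2 - 4 * (a : ℂ) * (c : ℂ) ≠ 0) ∧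
    0 < (((s - (b : ℂ)) ^ 2 - 4 * (a : ℂ) * (c : ℂ)) ^ ((1 : ℂ) / 2)).re ∧
    (c ≠ 0 →
      DifferentiableAt ℂ
        (fun z : ℂ =>
          (z - (b : ℂ) +
              ((z - (b : ℂ)) ^ 2 - 4 * (a : ℂ) * (c : ℂ)) ^ ((1 : ℂ) / 2)) /
            (2 * (c : ℂ))) s ∧
      DifferentiableAt ℂ
        (fun z : ℂ =>
          (z - (b : ℂ) -
              ((z - (b : ℂ)) ^ 2 - 4 * (a : ℂ) * (c : ℂ)) ^ ((1 : ℂ) / 2)) /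
            (2 * (c : ℂ))) s) := by
  have ht : 0 ≤ θ / Δx ^ 2 := by positivity
  have hb' : b = -(2 * (θ / Δx ^ 2)) - γ := by rw [hb, neg_div, mul_div_assoc]
  have hb_neg : b < 0 := by linarith
  have hdisc : 4 * a * c < b ^ 2 := by
    rw [ha, hc, hb']
    exact four_mul_add_mul_neg_add_lt_sq _ ht hγ
  have hslit : (s - b) ^ 2 - 4 * (a : ℂ) * c ∈ slitPlane :=
    mod_cast sub_sq_sub_mem_slitPlane hs hb_neg hdisc
  exact ⟨slitPlane_ne_zero hslit, cpow_one_half_re_pos_of_mem_slitPlane hslit,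
    fun _ => ⟨by fun_prop (disch := exact hslit), by fun_prop (disch := exact hslit)⟩⟩

/-- On the closed right half-plane, `(s-b)² - 4ac` never vanishes, its
principal square root has positive real part, and the characteristic roots
`r±(s)` are holomorphic there. -/
theorem stmt_13 (μ θ γ Δx : ℝ) (hθ : 0 < θ) (hγ : 0 < γ) (hΔx : 0 < Δx)
    (a b c : ℝ)
    (ha : a = μ / (2 * Δx) + θ / Δx ^ 2)
    (hb : b = -(2 * θ) / Δx ^ 2 - γ)
    (hc : c = -(μ / (2 * Δx)) + θ / Δx ^ 2)
    (s : ℂ) (hs : 0 ≤ s.re) :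
    ((s - (b : ℂ)) ^ 2 - 4 * (a : ℂ) * (c : ℂ) ≠ 0) ∧
    0 < (((s - (b : ℂ)) ^ 2 - 4 * (a : ℂ) * (c : ℂ)) ^ ((1 : ℂ) / 2)).re ∧
    (c ≠ 0 →
      DifferentiableAt ℂ
        (fun z : ℂ =>
          (z - (b : ℂ) +
              ((z - (b : ℂ)) ^ 2 - 4 * (a : ℂ) * (c : ℂ)) ^ ((1 : ℂ) / 2)) /
            (2 * (c : ℂ))) s ∧
      DifferentiableAt ℂ
        (fun z : ℂ =>
          (z - (b : ℂ) -
              ((z - (b : ℂ)) ^ 2 - 4 * (a : ℂ) * (c : ℂ)) ^ ((1 : ℂ) / 2)) /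
            (2 * (c : ℂ))) s) :=
  stmt_13_general μ θ γ Δx hθ hγ a b c ha hb hc s hs
end

section
/- Suppose -b > a > 0, c < 0 (real numbers), and ω ∈ ℝ. Then |iω - b + √((iω - b)² - 4ac)| > 2a, where √ denotes the principal branch. Consequently the root r₋ = 2a/(iω - b + √((iω-b)² - 4ac)) satisfies |r₋| < 1. -/
/-!
Write `u = iω - b`, so `Re u = -b > 0`, and `δ = -4ac > 0`. For `w = u² + δ` one has the identity
`‖w‖² - (‖u‖² - δ)² = 4 (Re u)² δ > 0`, hence `‖w‖ + Re w > 2 (Re u)²` and the principal square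
root satisfies `Re √w = √((‖w‖ + Re w) / 2) > Re u`. Therefore
`‖u + √w‖ ≥ Re (u + √w) > 2 Re u = -2b > 2a`, and `|r₋| = 2a / ‖u + √w‖ < 1`.
-/

namespace Complex

theorem normSq_sub_lt_norm_sq_add_ofReal (u : ℂ) {δ : ℝ} (hu : u.re ≠ 0) (hδ : 0 < δ) :
    u.re ^ 2 + u.im ^ 2 - δ < ‖u ^ 2 + δ‖ := by
  have hre : (u ^ 2 + δ).re = u.re ^ 2 - u.im ^ 2 + δ := by simp [pow_two]
  have him : (u ^ 2 + δ).im = 2 * u.re * u.im := by simp [pow_two]; ring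
  have hsq : (u.re ^ 2 + u.im ^ 2 - δ) ^ 2 < ‖u ^ 2 + δ‖ ^ 2 := by
    rw [Complex.sq_norm, normSq_apply, hre, him]
    nlinarith [mul_pos (pow_pos (abs_pos.2 hu) 2) hδ, sq_abs u.re]
  exact lt_of_pow_lt_pow_left₀ 2 (norm_nonneg _) hsq

theorem abs_re_lt_re_cpow_half_sq_add_ofReal (u : ℂ) {δ : ℝ} (hu : u.re ≠ 0) (hδ : 0 < δ) :
    |u.re| < ((u ^ 2 + δ) ^ ((1 : ℂ) / 2)).re := by
  have hre : (u ^ 2 + δ).re = u.re ^ 2 - u.im ^ 2 + δ := by simp [pow_two]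
  rw [one_div, cpow_inv_two_re, Real.lt_sqrt (abs_nonneg _), sq_abs, hre]
  linarith [normSq_sub_lt_norm_sq_add_ofReal u hu hδ]

theorem two_mul_re_lt_norm_add_cpow_half_sq_add_ofReal (u : ℂ) {δ : ℝ} (hu : 0 < u.re)
    (hδ : 0 < δ) : 2 * u.re < ‖u + (u ^ 2 + δ) ^ ((1 : ℂ) / 2)‖ := by
  have hroot := abs_re_lt_re_cpow_half_sq_add_ofReal u hu.ne' hδ
  rw [abs_of_pos hu] at hroot
  calc 2 * u.re < (u + (u ^ 2 + δ) ^ ((1 : ℂ) / 2)).re := by rw [add_re]; linarith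
    _ ≤ _ := re_le_norm _

end Complex

/-- If `-b > a > 0` and `c < 0`, then `|iω - b + √((iω-b)² - 4ac)| > 2a`,
hence `|r₋| < 1`. -/
theorem stmt_14 (a b c : ℝ) (hab : a < -b) (ha : 0 < a) (hc : c < 0) (ω : ℝ) :
    2 * a <
      ‖(Complex.I * (ω : ℂ) - (b : ℂ) +
        ((Complex.I * (ω : ℂ) - (b : ℂ)) ^ 2 - 4 * (a : ℂ) * (c : ℂ)) ^
          ((1 : ℂ) / 2))‖ ∧
    ‖((2 * (a : ℂ)) /
      (Complex.I * (ω : ℂ) - (b : ℂ) +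
        ((Complex.I * (ω : ℂ) - (b : ℂ)) ^ 2 - 4 * (a : ℂ) * (c : ℂ)) ^
          ((1 : ℂ) / 2)))‖ < 1 := by
  set u : ℂ := Complex.I * ω - b
  have hu : u.re = -b := by simp [u]
  have hδ : (u ^ 2 - 4 * a * c : ℂ) = u ^ 2 + ((-4 * a * c : ℝ) : ℂ) := by push_cast; ring
  have hnorm : 2 * a < ‖u + (u ^ 2 - 4 * a * c) ^ ((1 : ℂ) / 2)‖ := by
    rw [hδ]
    have := Complex.two_mul_re_lt_norm_add_cpow_half_sq_add_ofReal u (by linarith)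
      (by nlinarith : 0 < -4 * a * c)
    linarith
  refine ⟨hnorm, ?_⟩
  have h2a : ‖(2 * a : ℂ)‖ = 2 * a := by
    rw [← Complex.ofReal_ofNat, ← Complex.ofReal_mul, Complex.norm_real,
      Real.norm_of_nonneg (by linarith)]
  rw [norm_div, h2a, div_lt_one (by linarith)]
  exact hnorm
end

section
/- Suppose -b > 2a > 0 and c is real with 4ac < b², and ω ∈ ℝ. Then |iω - b + √((iω-b)² - 4ac)| > 2a, hence |r₋| < 1 where r₋ = 2a/(iω - b + √((iω-b)²-4ac)). -/
open Complex Real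

/-- The principal branch of `u ^ y` has argument `y * arg u ∈ [-π/2, π/2]` once `|y| ≤ 1/2`. -/
lemma Complex.re_cpow_ofReal_nonneg (u : ℂ) {y : ℝ} (hy : |y| ≤ 1 / 2) :
    0 ≤ (u ^ (y : ℂ)).re := by
  rw [cpow_ofReal_re]
  refine mul_nonneg (Real.rpow_nonneg (norm_nonneg u) y) (Real.cos_nonneg_of_mem_Icc ?_)
  have harg : |arg u * y| ≤ π / 2 := by
    rw [abs_mul]
    calc |arg u| * |y| ≤ π * (1 / 2) :=
          mul_le_mul (abs_arg_le_pi u) hy (abs_nonneg y) Real.pi_pos.le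
      _ = π / 2 := by ring
  exact abs_le.mp harg

lemma Complex.re_cpow_half_nonneg (u : ℂ) : 0 ≤ (u ^ ((1 : ℂ) / 2)).re := by
  have hy : |(1 / 2 : ℝ)| ≤ 1 / 2 := by norm_num [abs_of_pos]
  simpa using re_cpow_ofReal_nonneg u hy

lemma Complex.norm_ofReal_div_lt_one {r : ℝ} {z : ℂ} (hr : 0 < r) (hrz : r < ‖z‖) :
    ‖(r : ℂ) / z‖ < 1 := by
  rw [norm_div, norm_real, Real.norm_of_nonneg hr.le, div_lt_one (hr.trans hrz)]
  exact hrz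

theorem stmt_15_general (a b c : ℝ) (hab : 2 * a < -b) (ha : 0 < a)
    (ω : ℝ) :
    2 * a <
      ‖(Complex.I * (ω : ℂ) - (b : ℂ) +
        ((Complex.I * (ω : ℂ) - (b : ℂ)) ^ 2 - 4 * (a : ℂ) * (c : ℂ)) ^
          ((1 : ℂ) / 2))‖ ∧
    ‖((2 * (a : ℂ)) /
      (Complex.I * (ω : ℂ) - (b : ℂ) +
        ((Complex.I * (ω : ℂ) - (b : ℂ)) ^ 2 - 4 * (a : ℂ) * (c : ℂ)) ^
          ((1 : ℂ) / 2)))‖ < 1 := by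
  set w := ((I * ω - b) ^ 2 - 4 * a * c) ^ ((1 : ℂ) / 2)
  have hre : (I * ω - b + w).re = -b + w.re := by simp
  have hnorm : 2 * a < ‖I * ω - b + w‖ := by
    refine lt_of_lt_of_le ?_ (re_le_norm _)
    linarith [re_cpow_half_nonneg ((I * ω - b) ^ 2 - 4 * a * c)]
  refine ⟨hnorm, ?_⟩
  exact_mod_cast norm_ofReal_div_lt_one (by positivity : (0 : ℝ) < 2 * a) hnorm

/-- If `-b > 2a > 0` and `4ac < b²`, then `|iω - b + √((iω-b)² - 4ac)| > 2a`,
hence `|r₋| < 1`. -/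
theorem stmt_15 (a b c : ℝ) (hab : 2 * a < -b) (ha : 0 < a)
    (h4ac : 4 * a * c < b ^ 2) (ω : ℝ) :
    2 * a <
      ‖(Complex.I * (ω : ℂ) - (b : ℂ) +
        ((Complex.I * (ω : ℂ) - (b : ℂ)) ^ 2 - 4 * (a : ℂ) * (c : ℂ)) ^
          ((1 : ℂ) / 2))‖ ∧
    ‖((2 * (a : ℂ)) /
      (Complex.I * (ω : ℂ) - (b : ℂ) +
        ((Complex.I * (ω : ℂ) - (b : ℂ)) ^ 2 - 4 * (a : ℂ) * (c : ℂ)) ^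
          ((1 : ℂ) / 2)))‖ < 1 :=
  stmt_15_general a b c hab ha ω
end

section
/- Let a₂, b₂, c₂, a₁, b₁, c₁, s be complex with r₋ a root of c₂r² + (b₂-s)r + a₂ = 0 and r₊ a root of c₁r² + (b₁-s)r + a₁ = 0, both roots nonzero, c₂r₋ + b₂ - s ≠ 0 and a₁r₊⁻¹ + b₁ - s ≠ 0. If B^{k+1} = -c₁ r₋ A^k / (a₁ r₊⁻² + (b₁-s) r₊⁻¹) and A^{k+1} = -a₂ r₊⁻¹ B^k / (c₂ r₋² + (b₂-s) r₋), then A^{k+2} = ρ A^k and B^{k+2} = ρ B^k with ρ = (a₂c₁)/((c₂r₋ + b₂ - s)(a₁r₊⁻¹ + b₁ - s)) = r₋/r₊. -/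
/-!
Since `r₋ ≠ 0` solves `c₂ r² + (b₂ - s) r + a₂ = 0`, dividing by `r₋` gives `c₂ r₋ + b₂ - s = -a₂ / r₋`
and `c₂ r₋² + (b₂ - s) r₋ = -a₂`; symmetrically `r₊⁻¹` solves the reciprocal quadratic, which gives
`a₁ r₊⁻¹ + b₁ - s = -c₁ r₊` and `a₁ r₊⁻² + (b₁ - s) r₊⁻¹ = -c₁`. The two recursions thus collapse to
`B^{k+1} = r₋ A^k` and `A^{k+1} = r₊⁻¹ B^k`, and `ρ = a₂ c₁ / ((-a₂ / r₋)(-c₁ r₊)) = r₋ / r₊`.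
-/

section Quadratic

variable {K : Type*} [Field K] {a b c r : K}

theorem reciprocal_quadratic_eq_zero (h : c * r ^ 2 + b * r + a = 0) (hr : r ≠ 0) :
    a * r⁻¹ ^ 2 + b * r⁻¹ + c = 0 := by
  field_simp
  linear_combination h

theorem linear_eq_neg_mul_inv_of_quadratic_eq_zero (h : c * r ^ 2 + b * r + a = 0) (hr : r ≠ 0) :
    c * r + b = -a * r⁻¹ := by
  field_simp
  linear_combination h

end Quadratic

theorem coupled_recursion_two_step {M : Type*} [CommSemigroup M] {A B : ℕ → M} {α β : M}
    (hB : ∀ k, B (k + 1) = β * A k) (hA : ∀ k, A (k + 1) = α * B k) (k : ℕ) :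
    A (k + 2) = α * β * A k ∧ B (k + 2) = α * β * B k := by
  constructor
  · rw [hA, hB, mul_assoc]
  · rw [hB, hA, ← mul_assoc, mul_comm β]

/-- The amplitude recursions of the Dirichlet Schwarz waveform relaxation
compose into the contraction relation `A^{k+2} = ρ A^k`, `B^{k+2} = ρ B^k` with
`ρ = r₋/r₊`. -/
theorem stmt_18 (a₁ b₁ c₁ a₂ b₂ c₂ s rm rp : ℂ)
    (hrm : c₂ * rm ^ 2 + (b₂ - s) * rm + a₂ = 0)
    (hrp : c₁ * rp ^ 2 + (b₁ - s) * rp + a₁ = 0)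
    (hrm0 : rm ≠ 0) (hrp0 : rp ≠ 0)
    (hd1 : c₂ * rm + b₂ - s ≠ 0) (hd2 : a₁ * rp⁻¹ + b₁ - s ≠ 0)
    (A B : ℕ → ℂ)
    (hB : ∀ k, B (k + 1) =
      -(c₁ * rm) * A k / (a₁ * rp⁻¹ ^ 2 + (b₁ - s) * rp⁻¹))
    (hA : ∀ k, A (k + 1) =
      -(a₂ * rp⁻¹) * B k / (c₂ * rm ^ 2 + (b₂ - s) * rm)) :
    (∀ k, A (k + 2) =
        (a₂ * c₁) / ((c₂ * rm + b₂ - s) * (a₁ * rp⁻¹ + b₁ - s)) * A k ∧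
      B (k + 2) =
        (a₂ * c₁) / ((c₂ * rm + b₂ - s) * (a₁ * rp⁻¹ + b₁ - s)) * B k) ∧
    (a₂ * c₁) / ((c₂ * rm + b₂ - s) * (a₁ * rp⁻¹ + b₁ - s)) = rm / rp := by
  have hrp' := reciprocal_quadratic_eq_zero hrp hrp0
  have hlin₂ : c₂ * rm + b₂ - s = -a₂ * rm⁻¹ := by
    rw [add_sub_assoc]; exact linear_eq_neg_mul_inv_of_quadratic_eq_zero hrm hrm0
  have hlin₁ : a₁ * rp⁻¹ + b₁ - s = -c₁ * rp := by
    rw [add_sub_assoc]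
    simpa only [inv_inv] using linear_eq_neg_mul_inv_of_quadratic_eq_zero hrp' (inv_ne_zero hrp0)
  have ha₂ : a₂ ≠ 0 := neg_ne_zero.mp (left_ne_zero_of_mul (hlin₂ ▸ hd1))
  have hc₁ : c₁ ≠ 0 := neg_ne_zero.mp (left_ne_zero_of_mul (hlin₁ ▸ hd2))
  have hρ : a₂ * c₁ / ((c₂ * rm + b₂ - s) * (a₁ * rp⁻¹ + b₁ - s)) = rm / rp := by
    rw [hlin₂, hlin₁]
    field_simp
  have hB' : ∀ k, B (k + 1) = rm * A k := fun k => by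
    rw [hB, eq_neg_of_add_eq_zero_left hrp']
    field_simp
  have hA' : ∀ k, A (k + 1) = rp⁻¹ * B k := fun k => by
    rw [hA, eq_neg_of_add_eq_zero_left hrm]
    field_simp
  refine ⟨fun k => ?_, hρ⟩
  rw [hρ, div_eq_inv_mul]
  exact coupled_recursion_two_step hB' hA' k
end
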